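/- arXiv:1504.07085 — 6 statements merged into one kernel-verified Lean document; each statement's English description precedes it below -/
import Mathlib

section
/- Let A be an n×n real symmetric positive definite matrix, let B be an m×n real matrix, and let C be an m×m real symmetric positive semidefinite matrix such that xᵀCx > 0 for every nonzero x ∈ ℝᵐ with Bᵀx = 0. Then the (n+m)×(n+m) block matrix [[A, Bᵀ], [B, −C]] is invertible; equivalently, the saddle-point system [[A, Bᵀ], [B, −C]]·[u; p] = [g; f] has a unique solution for every right-hand side. -/
/-!
Testing a kernel vector `(u, p)` of `[[A, Bᵀ], [B, -C]]` against itself gives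
`uᵀAu = -pᵀCp`: the left side is `≥ 0` with equality only at `u = 0`, the right side is `≤ 0`,
so `u = 0`. Then the first block row says `Bᵀp = 0` and `pᵀCp = 0`, which forces `p = 0`
by the definiteness of `C` on the kernel of `Bᵀ`.
-/

open Matrix

section SaddlePoint

variable {n m R : Type*} [Fintype n] [Fintype m]

theorem dotProduct_mulVec_eq_neg_of_saddle_eq_zero [CommRing R]
    {A : Matrix n n R} {B : Matrix m n R} {C : Matrix m m R} {u : n → R} {p : m → R}
    (h₁ : A *ᵥ u + Bᵀ *ᵥ p = 0) (h₂ : B *ᵥ u - C *ᵥ p = 0) :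
    u ⬝ᵥ A *ᵥ u = -(p ⬝ᵥ C *ᵥ p) :=
  calc u ⬝ᵥ A *ᵥ u = -(u ⬝ᵥ Bᵀ *ᵥ p) := by
        rw [eq_neg_iff_add_eq_zero, ← dotProduct_add, h₁, dotProduct_zero]
    _ = -(p ⬝ᵥ B *ᵥ u) := by
        rw [mulVec_transpose, dotProduct_comm, ← dotProduct_mulVec]
    _ = -(p ⬝ᵥ C *ᵥ p) := by rw [sub_eq_zero.mp h₂]

theorem eq_zero_of_saddle_eq_zero
    {A : Matrix n n ℝ} {B : Matrix m n ℝ} {C : Matrix m m ℝ}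
    (hA : A.PosDef) (hC : C.PosSemidef)
    (hCker : ∀ x : m → ℝ, x ≠ 0 → Bᵀ *ᵥ x = 0 → 0 < x ⬝ᵥ C *ᵥ x)
    {u : n → ℝ} {p : m → ℝ}
    (h₁ : A *ᵥ u + Bᵀ *ᵥ p = 0) (h₂ : B *ᵥ u - C *ᵥ p = 0) :
    u = 0 ∧ p = 0 := by
  have hquad := dotProduct_mulVec_eq_neg_of_saddle_eq_zero h₁ h₂
  have hCp : 0 ≤ p ⬝ᵥ C *ᵥ p := by simpa using hC.dotProduct_mulVec_nonneg p
  have hu : u = 0 := by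
    by_contra hu
    have hAu : 0 < u ⬝ᵥ A *ᵥ u := by simpa using hA.dotProduct_mulVec_pos hu
    linarith
  refine ⟨hu, ?_⟩
  have hBp : Bᵀ *ᵥ p = 0 := by simpa [hu] using h₁
  by_contra hp
  have := hCker p hp hBp
  simp only [hu, mulVec_zero, dotProduct_zero] at hquad
  linarith

theorem eq_zero_of_fromBlocks_saddle_mulVec_eq_zero
    {A : Matrix n n ℝ} {B : Matrix m n ℝ} {C : Matrix m m ℝ}
    (hA : A.PosDef) (hC : C.PosSemidef)
    (hCker : ∀ x : m → ℝ, x ≠ 0 → Bᵀ *ᵥ x = 0 → 0 < x ⬝ᵥ C *ᵥ x)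
    {v : n ⊕ m → ℝ} (hv : fromBlocks A Bᵀ B (-C) *ᵥ v = 0) :
    v = 0 := by
  rw [fromBlocks_mulVec, ← Sum.elim_zero_zero, Sum.elim_eq_iff, neg_mulVec,
    ← sub_eq_add_neg] at hv
  obtain ⟨hu, hp⟩ := eq_zero_of_saddle_eq_zero hA hC hCker hv.1 hv.2
  rw [← Sum.elim_comp_inl_inr v, hu, hp, Sum.elim_zero_zero]

end SaddlePoint

/-- If `A` is an `n×n` real symmetric positive definite matrix, `B` an
`m×n` real matrix, and `C` an `m×m` real symmetric positive semidefinite matrix which is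
positive definite on the kernel of `Bᵀ`, then the saddle-point block matrix
`[[A, Bᵀ], [B, -C]]` is invertible. -/
theorem saddle_point_matrix_isUnit
    (n m : ℕ)
    (A : Matrix (Fin n) (Fin n) ℝ)
    (B : Matrix (Fin m) (Fin n) ℝ)
    (C : Matrix (Fin m) (Fin m) ℝ)
    (hA : A.PosDef)
    (hC : C.PosSemidef)
    (hCker : ∀ x : Fin m → ℝ, x ≠ 0 → Bᵀ.mulVec x = 0 → 0 < x ⬝ᵥ C.mulVec x) :
    IsUnit (Matrix.fromBlocks A Bᵀ B (-C)) := by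
  rw [← mulVec_injective_iff_isUnit]
  exact (injective_iff_map_eq_zero (mulVecLin _)).mpr fun _ =>
    eq_zero_of_fromBlocks_saddle_mulVec_eq_zero hA hC hCker
end

section
/- Let A be an n×n real symmetric positive definite matrix, let B be an m×n real matrix, and let C be an m×m real symmetric positive semidefinite matrix such that xᵀCx > 0 for every nonzero x ∈ ℝᵐ with Bᵀx = 0. Then the matrix B·A⁻¹·Bᵀ + C is symmetric positive definite. -/
open Matrix

namespace Matrix

variable {m n R : Type*} [Fintype n] [Fintype m]

theorem dotProduct_mul_mul_conjTranspose_mulVec [CommRing R] [StarRing R]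
    (B : Matrix m n R) (P : Matrix n n R) (x : m → R) :
    star x ⬝ᵥ (B * P * Bᴴ) *ᵥ x = star (Bᴴ *ᵥ x) ⬝ᵥ P *ᵥ (Bᴴ *ᵥ x) := by
  rw [← mulVec_mulVec, ← mulVec_mulVec, dotProduct_mulVec, star_mulVec, conjTranspose_conjTranspose]

theorem PosDef.dotProduct_mul_mul_conjTranspose_mulVec_pos [CommRing R] [PartialOrder R]
    [StarRing R] {P : Matrix n n R} (hP : P.PosDef) (B : Matrix m n R) {x : m → R}
    (hx : Bᴴ *ᵥ x ≠ 0) : 0 < star x ⬝ᵥ (B * P * Bᴴ) *ᵥ x := by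
  rw [dotProduct_mul_mul_conjTranspose_mulVec]
  exact hP.dotProduct_mulVec_pos hx

theorem PosSemidef.posDef_add_of_pos_or_pos [Ring R] [PartialOrder R] [StarRing R]
    [IsOrderedAddMonoid R] {S C : Matrix n n R} (hS : S.PosSemidef) (hC : C.PosSemidef)
    (hpos : ∀ x : n → R, x ≠ 0 → 0 < star x ⬝ᵥ S *ᵥ x ∨ 0 < star x ⬝ᵥ C *ᵥ x) :
    (S + C).PosDef := by
  refine posDef_iff_dotProduct_mulVec.2 ⟨hS.1.add hC.1, fun x hx => ?_⟩
  rw [add_mulVec, dotProduct_add]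
  rcases hpos x hx with hSx | hCx
  · exact add_pos_of_pos_of_nonneg hSx (hC.dotProduct_mulVec_nonneg x)
  · exact add_pos_of_nonneg_of_pos (hS.dotProduct_mulVec_nonneg x) hCx

end Matrix

/-- If `A` is symmetric positive definite, `B` is an `m×n` matrix and `C`
is symmetric positive semidefinite and positive definite on the kernel of `Bᵀ`, then the
dual Schur complement `B·A⁻¹·Bᵀ + C` is symmetric positive definite. -/
theorem dual_schur_complement_posDef
    (n m : ℕ)
    (A : Matrix (Fin n) (Fin n) ℝ)
    (B : Matrix (Fin m) (Fin n) ℝ)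
    (C : Matrix (Fin m) (Fin m) ℝ)
    (hA : A.PosDef)
    (hC : C.PosSemidef)
    (hCker : ∀ x : Fin m → ℝ, x ≠ 0 → Bᵀ.mulVec x = 0 → 0 < x ⬝ᵥ C.mulVec x) :
    (B * A⁻¹ * Bᵀ + C).PosDef := by
  rw [← conjTranspose_eq_transpose_of_trivial] at hCker ⊢
  refine (hA.inv.posSemidef.mul_mul_conjTranspose_same B).posDef_add_of_pos_or_pos hC
    fun x hx => ?_
  by_cases hker : Bᴴ *ᵥ x = 0
  · exact .inr (by simpa using hCker x hx hker)
  · exact .inl (hA.inv.dotProduct_mul_mul_conjTranspose_mulVec_pos B hker)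
end

section
/- Let S be an n×n real symmetric positive semidefinite matrix, D an m×n real matrix, and Φ (n×m), L (m×m) matrices satisfying S·Φ = Dᵀ·L and D·Φ = I. Assume that the kernel of S is orthogonal to the kernel of D (i.e., ⟨u, v⟩ = 0 whenever S·u = 0 and D·v = 0). Then the kernel of S is contained in the range of Φ. -/
open Matrix

/-- Let `S` be symmetric positive semidefinite, `S·Φ = Dᵀ·L` and
`D·Φ = I`. If the kernel of `S` is orthogonal to the kernel of `D`, then the kernel of
`S` is contained in the range of `Φ`. -/
theorem null_S_subset_range_Phi
    (n m : ℕ)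
    (S : Matrix (Fin n) (Fin n) ℝ)
    (hS : S.PosSemidef)
    (D : Matrix (Fin m) (Fin n) ℝ)
    (Φ : Matrix (Fin n) (Fin m) ℝ)
    (L : Matrix (Fin m) (Fin m) ℝ)
    (hSΦ : S * Φ = Dᵀ * L)
    (hDΦ : D * Φ = 1)
    (horth : ∀ u v : Fin n → ℝ, S.mulVec u = 0 → D.mulVec v = 0 → u ⬝ᵥ v = 0) :
    ∀ u : Fin n → ℝ, S.mulVec u = 0 → ∃ c : Fin m → ℝ, u = Φ.mulVec c := by
  intro u hu
  refine ⟨D.mulVec u, ?_⟩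
  set v : Fin n → ℝ := u - Φ.mulVec (D.mulVec u) with hv
  have hDv : D.mulVec v = 0 := by
    rw [hv, mulVec_sub, mulVec_mulVec, hDΦ, one_mulVec, sub_self]
  have hSv : S.mulVec v = - (Dᵀ * L).mulVec (D.mulVec u) := by
    rw [hv, mulVec_sub, mulVec_mulVec, hSΦ, hu, zero_sub]
  have hquad : v ⬝ᵥ S.mulVec v = 0 := by
    rw [hSv, dotProduct_neg, ← mulVec_mulVec, dotProduct_mulVec, ← mulVec_transpose,
      transpose_transpose, hDv, zero_dotProduct, neg_zero]
  have hSv0 : S.mulVec v = 0 := by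
    have := (hS.dotProduct_mulVec_zero_iff v).mp (by simpa using hquad)
    exact this
  have hvv : v ⬝ᵥ v = 0 := horth v v hSv0 hDv
  have hv0 : v = 0 := by
    have := (dotProduct_self_eq_zero (v := v)).mp hvv
    exact this
  exact sub_eq_zero.mp hv0
end

section
/- Let S be an n×n real symmetric positive semidefinite matrix and D an m×n real matrix whose associated linear map ℝⁿ → ℝᵐ is surjective (D has full row rank), and assume that the intersection of the kernel of S and the kernel of D is trivial. Then the (n+m)×(n+m) block matrix [[−S, Dᵀ], [D, 0]] is invertible. -/
open Matrix

/-- If `S` is symmetric positive semidefinite, `D` has full row rank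
(surjective as a linear map), and the kernels of `S` and `D` intersect trivially, then
the constrained Neumann saddle-point matrix `[[−S, Dᵀ], [D, 0]]` is invertible. -/
theorem constrained_neumann_matrix_isUnit
    (n m : ℕ)
    (S : Matrix (Fin n) (Fin n) ℝ)
    (hS : S.PosSemidef)
    (D : Matrix (Fin m) (Fin n) ℝ)
    (hDsurj : Function.Surjective D.mulVec)
    (hker : ∀ x : Fin n → ℝ, S.mulVec x = 0 → D.mulVec x = 0 → x = 0) :
    IsUnit (Matrix.fromBlocks (-S) Dᵀ D 0) := by
  rw [← Matrix.mulVec_injective_iff_isUnit]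
  intro u v huv
  -- reduce to kernel triviality
  suffices h : ∀ w : Fin n ⊕ Fin m → ℝ, (fromBlocks (-S) Dᵀ D 0) *ᵥ w = 0 → w = 0 by
    have : (fromBlocks (-S) Dᵀ D 0) *ᵥ (u - v) = 0 := by
      rw [Matrix.mulVec_sub, huv, sub_self]
    have := h _ this
    exact sub_eq_zero.mp this
  intro w hw
  set x := w ∘ Sum.inl with hx
  set y := w ∘ Sum.inr with hy
  rw [fromBlocks_mulVec] at hw
  have h1 : (-S) *ᵥ x + Dᵀ *ᵥ y = 0 := by
    funext i; exact congrFun hw (Sum.inl i)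
  have h2 : D *ᵥ x = 0 := by
    funext i
    have := congrFun hw (Sum.inr i)
    simpa using this
  -- x ⬝ (-Sx + Dᵀy) = 0 gives xᵀSx = (Dx)⬝y = 0
  have hq : x ⬝ᵥ S *ᵥ x = 0 := by
    have h3 : x ⬝ᵥ ((-S) *ᵥ x + Dᵀ *ᵥ y) = 0 := by rw [h1, dotProduct_zero]
    have h4 : x ⬝ᵥ Dᵀ *ᵥ y = (D *ᵥ x) ⬝ᵥ y := by
      rw [Matrix.mulVec_transpose, dotProduct_comm, ← Matrix.dotProduct_mulVec,
        dotProduct_comm]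
    rw [dotProduct_add, h4, h2, zero_dotProduct, add_zero, Matrix.neg_mulVec,
      dotProduct_neg, neg_eq_zero] at h3
    exact h3
  have hSx : S *ᵥ x = 0 := by
    have := (hS.dotProduct_mulVec_zero_iff x).mp (by simpa using hq)
    exact this
  have hx0 : x = 0 := hker x hSx h2
  -- now Dᵀ y = 0, and D surjective gives y = 0
  have hDty : Dᵀ *ᵥ y = 0 := by
    rw [hx0] at h1
    simpa using h1
  have hy0 : y = 0 := by
    obtain ⟨z, hz⟩ := hDsurj y
    have : y ⬝ᵥ y = 0 := by
      rw [← hz, Matrix.dotProduct_mulVec, ← Matrix.mulVec_transpose, hz, hDty,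
        zero_dotProduct]
    exact dotProduct_self_eq_zero.mp this
  funext i
  cases i with
  | inl i => exact congrFun hx0 i
  | inr i => exact congrFun hy0 i
end

section
/- Let S be an n×n real symmetric positive semidefinite matrix, D an m×n real matrix, and Q an n×k real matrix with Qᵀ·Q = I (the k×k identity) whose range (column span) equals the kernel of D. Assume the intersection of the kernel of S and the kernel of D is trivial, so that Qᵀ·S·Q is invertible. Then for every r ∈ ℝⁿ, any pair (η, l) ∈ ℝⁿ × ℝᵐ satisfying −S·η + Dᵀ·l = r and D·η = 0 has η = −Q·(Qᵀ·S·Q)⁻¹·Qᵀ·r. -/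
open Matrix

/-- Explicit formula for the substructure correction of the BDDC
preconditioner: if the columns of `Q` form an orthonormal basis of the kernel of `D`,
`S` is symmetric positive semidefinite, and the kernels of `S` and `D` intersect
trivially (so that `Qᵀ·S·Q` is invertible), then any solution `(η, l)` of the constrained
Neumann problem `−S·η + Dᵀ·l = r`, `D·η = 0` satisfies
`η = −Q·(Qᵀ·S·Q)⁻¹·Qᵀ·r`. -/
theorem substructure_correction_formula
    (n m k : ℕ)
    (S : Matrix (Fin n) (Fin n) ℝ)
    (hS : S.PosSemidef)
    (D : Matrix (Fin m) (Fin n) ℝ)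
    (Q : Matrix (Fin n) (Fin k) ℝ)
    (hQorth : Qᵀ * Q = 1)
    (hQrange : LinearMap.range Q.mulVecLin = LinearMap.ker D.mulVecLin)
    (hker : ∀ x : Fin n → ℝ, S.mulVec x = 0 → D.mulVec x = 0 → x = 0) :
    ∀ (r : Fin n → ℝ) (η : Fin n → ℝ) (l : Fin m → ℝ),
      -(S.mulVec η) + Dᵀ.mulVec l = r → D.mulVec η = 0 →
        η = -(Q.mulVec ((Qᵀ * S * Q)⁻¹.mulVec (Qᵀ.mulVec r))) := by
  intro r η l heq hDη
  -- η is in the range of Q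
  have hmem : η ∈ LinearMap.range Q.mulVecLin := by
    rw [hQrange]; simpa [Matrix.mulVecLin] using hDη
  obtain ⟨y, hy⟩ := hmem
  simp only [Matrix.mulVecLin_apply] at hy
  -- D * Q = 0
  have hDQ : ∀ v : Fin k → ℝ, D.mulVec (Q.mulVec v) = 0 := by
    intro v
    have : Q.mulVec v ∈ LinearMap.ker D.mulVecLin := by
      rw [← hQrange]; exact ⟨v, rfl⟩
    simpa [Matrix.mulVecLin] using this
  -- Qᵀ S Q has trivial kernel
  have hkerQSQ : ∀ z : Fin k → ℝ, (Qᵀ * S * Q).mulVec z = 0 → z = 0 := by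
    intro z hz
    have h1 : (Qᵀ * S * Q).mulVec z = Qᵀ.mulVec (S.mulVec (Q.mulVec z)) := by
      simp [Matrix.mulVec_mulVec, Matrix.mul_assoc]
    have h2 : z ⬝ᵥ (Qᵀ * S * Q).mulVec z = 0 := by rw [hz]; simp
    rw [h1, Matrix.dotProduct_mulVec, Matrix.vecMul_transpose] at h2
    have hSz : S.mulVec (Q.mulVec z) = 0 := by
      have := (hS.dotProduct_mulVec_zero_iff (Q.mulVec z)).mp (by simpa using h2)
      simpa using this
    have hQz : Q.mulVec z = 0 := hker _ hSz (hDQ z)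
    have : (Qᵀ * Q).mulVec z = 0 := by
      rw [← Matrix.mulVec_mulVec, hQz, Matrix.mulVec_zero]
    rwa [hQorth, Matrix.one_mulVec] at this
  -- Qᵀ S Q is invertible
  have hunit : IsUnit (Qᵀ * S * Q) := by
    rw [← Matrix.mulVec_injective_iff_isUnit]
    intro a b hab
    have : (Qᵀ * S * Q).mulVec (a - b) = 0 := by
      rw [Matrix.mulVec_sub, hab, sub_self]
    exact sub_eq_zero.mp (hkerQSQ _ this)
  have hinv : (Qᵀ * S * Q)⁻¹ * (Qᵀ * S * Q) = 1 :=
    Matrix.nonsing_inv_mul _ (Matrix.isUnit_iff_isUnit_det _ |>.mp hunit)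
  -- multiply the equation by Qᵀ
  have hQDt : Qᵀ.mulVec (Dᵀ.mulVec l) = 0 := by
    have h0 : (D * Q)ᵀ = Qᵀ * Dᵀ := by rw [Matrix.transpose_mul]
    have hDQ0 : D * Q = 0 := by
      ext i j
      have := congrFun (hDQ (Pi.single j 1)) i
      simpa [Matrix.mul_apply, Matrix.mulVec, dotProduct, Pi.single_apply,
        mul_ite, mul_comm] using this
    rw [Matrix.mulVec_mulVec, ← h0, hDQ0]
    simp
  have heq2 : -((Qᵀ * S * Q).mulVec y) = Qᵀ.mulVec r := by
    have := congrArg Qᵀ.mulVec heq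
    rw [Matrix.mulVec_add, Matrix.mulVec_neg, hQDt, add_zero, ← hy] at this
    rw [← this]
    simp [Matrix.mulVec_mulVec, Matrix.mul_assoc]
  -- solve for y
  have hysol : y = -((Qᵀ * S * Q)⁻¹.mulVec (Qᵀ.mulVec r)) := by
    have := congrArg (Qᵀ * S * Q)⁻¹.mulVec heq2
    rw [Matrix.mulVec_neg, Matrix.mulVec_mulVec, hinv, Matrix.one_mulVec] at this
    rw [← this]
    simp
  rw [← hy, hysol, Matrix.mulVec_neg]
end

section
/- Let V be a finite-dimensional real inner product space, let Λ̂ ⊆ Λ̃ be subspaces of V, let a(·,·) be a symmetric bilinear form on V that is positive definite on Λ̃ (i.e., a(λ,λ) > 0 for all nonzero λ ∈ Λ̃), and let E : V → V be a linear map with E(Λ̃) ⊆ Λ̂ and E(u) = u for all u ∈ Λ̂. Let ω ≥ 0 be a constant such that a(E·λ, E·λ) ≤ ω·a(λ,λ) for all λ ∈ Λ̃. Define Ŝ : Λ̂ → Λ̂ by requiring ⟨Ŝ·u, v⟩ = a(u,v) for all u, v ∈ Λ̂, and define M : Λ̂ → Λ̂ by M·r = E·η, where η ∈ Λ̃ is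 the unique element with a(η, ζ) = ⟨r, E·ζ⟩ for all ζ ∈ Λ̃. Then every eigenvalue μ of the composed operator M∘Ŝ (i.e., every μ ∈ ℝ for which there exists nonzero u ∈ Λ̂ with M(Ŝ·u) = μ·u) satisfies 1 ≤ μ ≤ ω; in particular, the condition number of the preconditioned operator M∘Ŝ, the ratio of its largest to smallest eigenvalue, is at most ω. -/
/-!
Let `u` be an eigenvector, `M (Ŝ u) = μ u`, and let `η ∈ Λ̃` be the element defining `M (Ŝ u)`,
so `E η = μ u`. Testing the defining equation of `η` with `ζ = u` and `ζ = η` gives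
`a(η, u) = a(u, u)` and `a(η, η) = μ a(u, u)`. The first makes `u` the `a`-orthogonal projection
of `η`, so `a(u, u) ≤ a(η, η)`, i.e. `1 ≤ μ`. The second, with the stability bound applied to `η`,
gives `μ² a(u, u) = a(E η, E η) ≤ ω a(η, η) = ω μ a(u, u)`, i.e. `μ ≤ ω`.
-/

section

variable {R V : Type*} [CommRing R] [AddCommGroup V] [Module R V]

lemma apply_sub_sub_of_symm (a : V →ₗ[R] V →ₗ[R] R) (hsym : ∀ u v : V, a u v = a v u)
    (x y : V) : a (x - y) (x - y) = a x x - 2 * a x y + a y y := by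
  simp only [map_sub, LinearMap.sub_apply, hsym y x]
  ring

lemma apply_self_le_of_apply_eq [PartialOrder R] [IsOrderedRing R] (a : V →ₗ[R] V →ₗ[R] R)
    (hsym : ∀ u v : V, a u v = a v u) {η u : V} (hnonneg : 0 ≤ a (η - u) (η - u))
    (h : a η u = a u u) : a u u ≤ a η η := by
  have hdiff : a (η - u) (η - u) = a η η - a u u := by
    rw [apply_sub_sub_of_symm a hsym, h]
    ring
  exact sub_nonneg.mp (hdiff ▸ hnonneg)

lemma apply_self_nonneg_of_pos [PartialOrder R] {a : V →ₗ[R] V →ₗ[R] R} {S : Submodule R V}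
    (hpos : ∀ l ∈ S, l ≠ 0 → 0 < a l l) {l : V} (hl : l ∈ S) : 0 ≤ a l l := by
  rcases eq_or_ne l 0 with rfl | hl0
  · simp
  · exact (hpos l hl hl0).le

end

theorem bddc_eigenvalue_bound_general
    {V : Type*} [NormedAddCommGroup V] [InnerProductSpace ℝ V]
    (Λhat Λtil : Submodule ℝ V) (hsub : Λhat ≤ Λtil)
    (a : V →ₗ[ℝ] V →ₗ[ℝ] ℝ)
    (hsym : ∀ u v : V, a u v = a v u)
    (hpos : ∀ l ∈ Λtil, l ≠ 0 → 0 < a l l)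
    (E : V →ₗ[ℝ] V)
    (hEid : ∀ u ∈ Λhat, E u = u)
    (ω : ℝ)
    (hbound : ∀ l ∈ Λtil, a (E l) (E l) ≤ ω * a l l)
    (Shat : Λhat →ₗ[ℝ] Λhat)
    (hShat : ∀ u v : Λhat, (inner ℝ ((Shat u : V)) ((v : V)) : ℝ) = a (u : V) (v : V))
    (M : Λhat →ₗ[ℝ] Λhat)
    (hM : ∀ r : Λhat, ∃ η : V,
      (η ∈ Λtil ∧ ∀ ζ ∈ Λtil, a η ζ = (inner ℝ ((r : V)) (E ζ) : ℝ)) ∧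
      ((M r : V) = E η) ∧
      (∀ η' : V, (η' ∈ Λtil ∧ ∀ ζ ∈ Λtil, a η' ζ = (inner ℝ ((r : V)) (E ζ) : ℝ)) →
        η' = η)) :
    ∀ (μ : ℝ) (u : Λhat), u ≠ 0 → M (Shat u) = μ • u → 1 ≤ μ ∧ μ ≤ ω := by
  intro μ u hu hMu
  obtain ⟨η, ⟨hη, hηeq⟩, hMη, -⟩ := hM (Shat u)
  have hu' : (u : V) ∈ Λtil := hsub u.2
  have hc : 0 < a u u := hpos _ hu' (by exact_mod_cast hu)
  have hEη : E η = μ • (u : V) := by rw [← hMη, hMu, Submodule.coe_smul]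
  have hηu : a η u = a u u := by rw [hηeq _ hu', hEid _ u.2, hShat]
  have hηη : a η η = μ * a u u := by rw [hηeq _ hη, hEη, real_inner_smul_right, hShat]
  have hlower : a u u ≤ a η η :=
    apply_self_le_of_apply_eq a hsym (apply_self_nonneg_of_pos hpos (Λtil.sub_mem hη hu')) hηu
  have hone : 1 ≤ μ := le_of_mul_le_mul_right (by linarith) hc
  refine ⟨hone, le_of_mul_le_mul_right (a := μ * a u u) ?_ (by positivity)⟩
  calc μ * (μ * a u u) = a (E η) (E η) := by
        simp only [hEη, map_smul, LinearMap.smul_apply, smul_eq_mul]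
    _ ≤ ω * a η η := hbound η hη
    _ = ω * (μ * a u u) := by rw [hηη]

/-- Abstract condition number bound for the BDDC preconditioner: every
eigenvalue `μ` of the preconditioned operator `M ∘ Ŝ` satisfies `1 ≤ μ ≤ ω`. -/
theorem bddc_eigenvalue_bound
    {V : Type*} [NormedAddCommGroup V] [InnerProductSpace ℝ V] [FiniteDimensional ℝ V]
    (Λhat Λtil : Submodule ℝ V) (hsub : Λhat ≤ Λtil)
    (a : V →ₗ[ℝ] V →ₗ[ℝ] ℝ)
    (hsym : ∀ u v : V, a u v = a v u)
    (hpos : ∀ l ∈ Λtil, l ≠ 0 → 0 < a l l)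
    (E : V →ₗ[ℝ] V)
    (hEmap : ∀ u ∈ Λtil, E u ∈ Λhat)
    (hEid : ∀ u ∈ Λhat, E u = u)
    (ω : ℝ) (hω : 0 ≤ ω)
    (hbound : ∀ l ∈ Λtil, a (E l) (E l) ≤ ω * a l l)
    (Shat : Λhat →ₗ[ℝ] Λhat)
    (hShat : ∀ u v : Λhat, (inner ℝ ((Shat u : V)) ((v : V)) : ℝ) = a (u : V) (v : V))
    (M : Λhat →ₗ[ℝ] Λhat)
    (hM : ∀ r : Λhat, ∃ η : V,
      (η ∈ Λtil ∧ ∀ ζ ∈ Λtil, a η ζ = (inner ℝ ((r : V)) (E ζ) : ℝ)) ∧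
      ((M r : V) = E η) ∧
      (∀ η' : V, (η' ∈ Λtil ∧ ∀ ζ ∈ Λtil, a η' ζ = (inner ℝ ((r : V)) (E ζ) : ℝ)) →
        η' = η)) :
    ∀ (μ : ℝ) (u : Λhat), u ≠ 0 → M (Shat u) = μ • u → 1 ≤ μ ∧ μ ≤ ω :=
  bddc_eigenvalue_bound_general Λhat Λtil hsub a hsym hpos E hEid ω hbound Shat hShat M hM
end
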